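/- Let ρ be the uniform probability measure on [a,b] with a < b, α > n−1, β > 0, and let X = (X_1,...,X_n) be distributed according to the jellium Gibbs measure P_n with background αρ. Then the law of the order statistics (X_{(n)},...,X_{(1)}) conditioned on the event {X_1,...,X_n} ⊂ [a,b] equals the law of (Y_n,...,Y_1) conditioned on a ≤ Y_n ≤ ... ≤ Y_1 ≤ b, where Y_1,...,Y_n are independent Gaussian random variables with mean E[Y_k] = (a+b)/2 + ((b−a)/(2α))(n+1−2k) and variance (b−a)/(αβ). -/

import Mathlib

open MeasureTheory ProbabilityTheory Filter Real Set
open scoped ENNReal NNReal BigOperators ProbabilityTheory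

noncomputable section

/-- Sum over pairs `i < j` of `|x i - x j|`. -/
def pairSum (n : ℕ) (x : Fin n → ℝ) : ℝ :=
  ∑ p ∈ Finset.univ.filter (fun p : Fin n × Fin n => p.1 < p.2), |x p.1 - x p.2|

/-- Coulomb potential generated by a background with density `ρ`. -/
def coulombU (ρ : ℝ → ℝ) (x : ℝ) : ℝ := -∫ y, |x - y| / 2 * ρ y

/-- Jellium energy with background of total charge `α` smeared along the density `ρ`. -/
def jelliumH (n : ℕ) (α : ℝ) (ρ : ℝ → ℝ) (x : Fin n → ℝ) : ℝ :=
  -(1 / 2) * pairSum n x - α * ∑ i, coulombU ρ (x i)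

/-- The jellium Gibbs measure `P_n = exp(−β H_n) dx / Z_n` on `ℝⁿ`. -/
def gibbs (n : ℕ) (β : ℝ) (Hn : (Fin n → ℝ) → ℝ) : Measure (Fin n → ℝ) :=
  (∫⁻ x, ENNReal.ofReal (Real.exp (-β * Hn x)))⁻¹ •
    volume.withDensity fun x => ENNReal.ofReal (Real.exp (-β * Hn x))

/-- Non-decreasing rearrangement of a vector, i.e. the vector
`(x₍n₎, …, x₍₁₎)` of order statistics from the minimum to the maximum. -/
def sortAsc {n : ℕ} (x : Fin n → ℝ) : Fin n → ℝ := x ∘ Tuple.sort x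

/-!
On sorted configurations inside `[a, b]` both parts of the energy are explicit: the potential
of the uniform background is the quadratic `-((x - a)² + (b - x)²) / (4 (b - a))`, and the pair
term is linear, `∑_{i<j} |y_i - y_j| = ∑_k (2k + 1 - n) y_k`. Completing the square in each
coordinate shows that there `exp (-β H)` is a constant multiple of a product of Gaussian
densities with means `(a + b)/2 + (b - a)(2k + 1 - n)/(2α)` and variance `(b - a)/(αβ)`.
Since `H` is symmetric and ties are Lebesgue-null, sorting the Gibbs measure restricted to the
permutation-invariant event `[a, b]ⁿ` gives `n!` times its restriction to sorted
configurations; normalising both sides proves the theorem. Finiteness of the partition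
function is where `α > n - 1` enters: the background pulls each particle with strength
`α/2`, the other particles push it away with strength at most `(n - 1)/2`.
-/

section PairSum

variable {n : ℕ}

open Finset in
lemma sum_filter_lt_add (f g : Fin n → ℝ) :
    ∑ p ∈ univ.filter (fun p : Fin n × Fin n => p.1 < p.2), (f p.1 + g p.2) =
      ∑ k : Fin n, ((n : ℝ) - 1 - k) * f k + ∑ k : Fin n, (k : ℝ) * g k := by
  rw [sum_add_distrib, sum_filter, sum_filter, Fintype.sum_prod_type, Fintype.sum_prod_type_right]
  congr 1 <;> refine sum_congr rfl fun k _ => ?_ <;> dsimp only <;> rw [← sum_filter]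
  · have := k.isLt
    rw [filter_lt_eq_Ioi, sum_const, Fin.card_Ioi, nsmul_eq_mul,
      Nat.cast_sub (by omega), Nat.cast_sub (by omega), Nat.cast_one]
  · rw [filter_gt_eq_Iio, sum_const, Fin.card_Iio, nsmul_eq_mul]

lemma pairSum_le_mul_sum_abs_sub (x : Fin n → ℝ) (c : ℝ) :
    pairSum n x ≤ ((n : ℝ) - 1) * ∑ i, |x i - c| := by
  calc pairSum n x
      ≤ ∑ p ∈ Finset.univ.filter (fun p : Fin n × Fin n => p.1 < p.2),
          (|x p.1 - c| + |x p.2 - c|) :=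
        Finset.sum_le_sum fun p _ => (abs_sub_le _ c _).trans_eq (by rw [abs_sub_comm c])
    _ = ((n : ℝ) - 1) * ∑ i, |x i - c| := by
        refine (sum_filter_lt_add (fun k => |x k - c|) (fun k => |x k - c|)).trans ?_
        rw [← Finset.sum_add_distrib, Finset.mul_sum]
        exact Finset.sum_congr rfl fun k _ => by ring

lemma pairSum_of_monotone {y : Fin n → ℝ} (hy : Monotone y) :
    pairSum n y = ∑ k : Fin n, (2 * (k : ℝ) + 1 - n) * y k := by
  calc pairSum n y
      = ∑ p ∈ Finset.univ.filter (fun p : Fin n × Fin n => p.1 < p.2), (-y p.1 + y p.2) :=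
        Finset.sum_congr rfl fun p hp => by
          rw [abs_sub_comm, abs_of_nonneg (sub_nonneg.2 (hy (Finset.mem_filter.1 hp).2.le))]
          ring
    _ = _ := by
        refine (sum_filter_lt_add (fun k => -y k) y).trans ?_
        rw [← Finset.sum_add_distrib]
        exact Finset.sum_congr rfl fun k _ => by ring

open Finset in
lemma two_mul_pairSum (x : Fin n → ℝ) :
    2 * pairSum n x = ∑ i, ∑ j, |x i - x j| := by
  have hgt : ∑ p ∈ univ.filter (fun p : Fin n × Fin n => ¬ p.1 < p.2 ∧ p.2 < p.1),
      |x p.1 - x p.2| = pairSum n x :=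
    sum_nbij' Prod.swap Prod.swap (by simp +contextual) (by simp +contextual [le_of_lt])
      (by simp) (by simp) fun p _ => abs_sub_comm _ _
  have hdiag : ∑ p ∈ univ.filter (fun p : Fin n × Fin n => ¬ p.1 < p.2 ∧ ¬ p.2 < p.1),
      |x p.1 - x p.2| = 0 :=
    sum_eq_zero fun p hp => by
      obtain ⟨-, h₁, h₂⟩ := mem_filter.1 hp
      simp [le_antisymm (not_lt.1 h₂) (not_lt.1 h₁)]
  rw [← Fintype.sum_prod_type', ← sum_filter_add_sum_filter_not univ (fun p => p.1 < p.2),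
    ← sum_filter_add_sum_filter_not (univ.filter fun p : Fin n × Fin n => ¬ p.1 < p.2)
      (fun p => p.2 < p.1), filter_filter, filter_filter, hgt, hdiag, add_zero, two_mul, pairSum]

lemma pairSum_comp_perm (x : Fin n → ℝ) (σ : Equiv.Perm (Fin n)) :
    pairSum n (x ∘ σ) = pairSum n x := by
  have hσ : ∑ i, ∑ j, |(x ∘ σ) i - (x ∘ σ) j| = ∑ i, ∑ j, |x i - x j| :=
    (Fintype.sum_congr _ _ fun i => Equiv.sum_comp σ fun j => |x (σ i) - x j|).trans
      (Equiv.sum_comp σ fun i => ∑ j, |x i - x j|)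
  linarith [two_mul_pairSum (x ∘ σ), two_mul_pairSum x]

end PairSum

lemma hasDerivAt_mul_abs_div_two (t : ℝ) : HasDerivAt (fun s : ℝ => s * |s| / 2) |t| t := by
  refine hasDerivAt_of_hasDerivAt_of_ne' (x := 0) (fun s hs => ?_) (by fun_prop)
    continuous_abs.continuousAt t
  refine (((hasDerivAt_id' s).mul (hasDerivAt_abs hs)).div_const 2).congr_deriv ?_
  rw [one_mul, self_mul_sign]
  ring

lemma integral_abs_sub (x a b : ℝ) :
    ∫ y in a..b, |x - y| = ((x - a) * |x - a| - (x - b) * |x - b|) / 2 := by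
  have hF : ∀ y ∈ uIcc a b, HasDerivAt (fun y => -((x - y) * |x - y| / 2)) |x - y| y :=
      fun y _ => by
    refine (((hasDerivAt_mul_abs_div_two (x - y)).comp y
      ((hasDerivAt_id' y).const_sub x)).neg).congr_deriv ?_
    ring
  rw [intervalIntegral.integral_eq_sub_of_hasDerivAt hF
    ((by fun_prop : Continuous fun y => |x - y|).intervalIntegrable a b)]
  ring

def uniformCoulombU (a b x : ℝ) : ℝ := -((x - a) * |x - a| - (x - b) * |x - b|) / (4 * (b - a))

lemma coulombU_indicator_Icc {a b : ℝ} (hab : a ≤ b) :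
    coulombU (Set.indicator (Set.Icc a b) fun _ => 1 / (b - a)) = uniformCoulombU a b := by
  funext x
  have hind : (fun y => |x - y| / 2 * (Set.Icc a b).indicator (fun _ => 1 / (b - a)) y) =
      (Set.Icc a b).indicator fun y => |x - y| / 2 * (1 / (b - a)) :=
    funext fun y => (Set.indicator_mul_right _ (fun y => |x - y| / 2) _).symm
  rw [coulombU, hind, integral_indicator measurableSet_Icc, integral_Icc_eq_integral_Ioc,
    ← intervalIntegral.integral_of_le hab, intervalIntegral.integral_mul_const,
    intervalIntegral.integral_div, integral_abs_sub,
    uniformCoulombU, mul_comm 4, ← div_div]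
  ring

lemma uniformCoulombU_of_mem_Icc {a b t : ℝ} (ht : t ∈ Set.Icc a b) :
    uniformCoulombU a b t = -((t - a) ^ 2 + (b - t) ^ 2) / (4 * (b - a)) := by
  rw [uniformCoulombU, abs_of_nonneg (sub_nonneg.2 ht.1), abs_of_nonpos (sub_nonpos.2 ht.2)]
  ring

lemma uniformCoulombU_le {a b : ℝ} (hab : a < b) (t : ℝ) :
    uniformCoulombU a b t ≤ -|t - (a + b) / 2| / 2 := by
  rw [uniformCoulombU, div_le_div_iff₀ (by linarith) two_pos]
  -- equality outside `[a, b]`, AM-GM inside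
  rcases le_total t a with hta | hat
  · rw [abs_of_nonpos (by linarith : t - a ≤ 0), abs_of_nonpos (by linarith : t - b ≤ 0),
      abs_of_nonpos (by linarith : t - (a + b) / 2 ≤ 0)]
    nlinarith
  rcases le_total t b with htb | hbt
  · rw [abs_of_nonneg (by linarith : 0 ≤ t - a), abs_of_nonpos (by linarith : t - b ≤ 0)]
    nlinarith [sq_nonneg (|t - (a + b) / 2| - (b - a) / 2), sq_abs (t - (a + b) / 2)]
  · rw [abs_of_nonneg (by linarith : 0 ≤ t - a), abs_of_nonneg (by linarith : 0 ≤ t - b),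
      abs_of_nonneg (by linarith : 0 ≤ t - (a + b) / 2)]
    nlinarith

lemma continuous_uniformCoulombU (a b : ℝ) : Continuous (uniformCoulombU a b) := by
  unfold uniformCoulombU
  fun_prop

section Jellium

variable {n : ℕ} {α β : ℝ} {ρ : ℝ → ℝ}

lemma jelliumH_comp_perm (x : Fin n → ℝ) (σ : Equiv.Perm (Fin n)) :
    jelliumH n α ρ (x ∘ σ) = jelliumH n α ρ x := by
  rw [jelliumH, jelliumH, pairSum_comp_perm, Function.comp_def,
    Equiv.sum_comp σ fun i => coulombU ρ (x i)]

lemma continuous_jelliumH (hU : Continuous (coulombU ρ)) : Continuous (jelliumH n α ρ) := by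
  unfold jelliumH pairSum
  fun_prop

lemma neg_mul_jelliumH_le {c : ℝ} (hU : ∀ t, coulombU ρ t ≤ -|t - c| / 2) (hα : 0 ≤ α)
    (hβ : 0 ≤ β) (x : Fin n → ℝ) :
    -β * jelliumH n α ρ x ≤ -(β * (α - (n - 1)) / 2) * ∑ i, |x i - c| := by
  have hpair := pairSum_le_mul_sum_abs_sub x c
  have hpot : ∑ i, coulombU ρ (x i) ≤ -(∑ i, |x i - c|) / 2 := by
    rw [neg_div, Finset.sum_div, ← Finset.sum_neg_distrib]
    exact Finset.sum_le_sum fun i _ => (hU (x i)).trans_eq (neg_div _ _)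
  have := mul_le_mul_of_nonneg_left
    (by nlinarith [mul_le_mul_of_nonneg_left hpot hα] :
      1 / 2 * pairSum n x + α * ∑ i, coulombU ρ (x i) ≤ ((n - 1) - α) / 2 * ∑ i, |x i - c|) hβ
  rw [jelliumH]
  linarith

lemma integrable_exp_neg_mul_abs_sub {κ : ℝ} (hκ : 0 < κ) (c : ℝ) :
    Integrable fun t : ℝ => exp (-κ * |t - c|) := by
  rw [← integrableOn_univ, ← Set.Iic_union_Ioi (a := c)]
  refine IntegrableOn.union ?_ ?_
  · refine IntegrableOn.congr_fun ((integrableOn_exp_mul_Iic hκ c).mul_const (exp (-κ * c)))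
      (fun t ht => ?_) measurableSet_Iic
    rw [abs_of_nonpos (sub_nonpos.2 ht), ← exp_add]
    ring_nf
  · refine IntegrableOn.congr_fun ((exp_neg_integrableOn_Ioi c hκ).mul_const (exp (κ * c)))
      (fun t ht => ?_) measurableSet_Ioi
    rw [abs_of_pos (sub_pos.2 ht), ← exp_add]
    ring_nf

lemma lintegral_exp_neg_mul_jelliumH_lt_top {c : ℝ} (hU : ∀ t, coulombU ρ t ≤ -|t - c| / 2)
    (hUc : Continuous (coulombU ρ)) (hα : (n : ℝ) - 1 < α) (hα0 : 0 ≤ α) (hβ : 0 < β) :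
    ∫⁻ x, ENNReal.ofReal (exp (-β * jelliumH n α ρ x)) < ∞ := by
  set κ := β * (α - (n - 1)) / 2
  have hκ : 0 < κ := by have := sub_pos.2 hα; positivity
  have hdom : Integrable fun x : Fin n → ℝ => ∏ i, exp (-κ * |x i - c|) :=
    Integrable.fintype_prod (μ := fun _ => volume) fun _ => integrable_exp_neg_mul_abs_sub hκ c
  have hH := continuous_jelliumH (n := n) (α := α) hUc
  refine (hdom.mono' (by fun_prop) (ae_of_all _ fun x => ?_)).lintegral_lt_top
  rw [Real.norm_of_nonneg (exp_nonneg _), ← exp_sum, ← Finset.mul_sum]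
  exact exp_le_exp.2 (neg_mul_jelliumH_le hU hα0 hβ.le x)

end Jellium

lemma lintegral_fin_nat_prod_eq_prod {n : ℕ} {E : Type*} [MeasurableSpace E]
    {μ : Fin n → Measure E} [∀ i, SigmaFinite (μ i)] {f : Fin n → E → ℝ≥0∞}
    (hf : ∀ i, Measurable (f i)) :
    ∫⁻ x, ∏ i, f i (x i) ∂Measure.pi μ = ∏ i, ∫⁻ x, f i x ∂μ i := by
  induction n with
  | zero => simp
  | succ n ih =>
    calc
      _ = ∫⁻ x : E × (Fin n → E), f 0 x.1 * ∏ i : Fin n, f i.succ (x.2 i)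
            ∂((μ 0).prod (Measure.pi fun i => μ i.succ)) := by
        rw [← ((measurePreserving_piFinSuccAbove μ 0).symm).lintegral_comp (by fun_prop)]
        simp_rw [MeasurableEquiv.piFinSuccAbove_symm_apply, Fin.insertNthEquiv,
          Fin.prod_univ_succ, Fin.insertNth_zero, Equiv.coe_fn_mk, Fin.cons_succ,
          Fin.zero_succAbove, cast_eq, Fin.cons_zero]
      _ = (∫⁻ x, f 0 x ∂μ 0) * ∫⁻ y, ∏ i : Fin n, f i.succ (y i) ∂Measure.pi fun i => μ i.succ :=
        lintegral_prod_mul (hf 0).aemeasurable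
          (Finset.measurable_prod _ fun i _ => (hf _).comp (measurable_pi_apply i)).aemeasurable
      _ = _ := by rw [ih fun i => hf _, Fin.prod_univ_succ]

lemma pi_withDensity {n : ℕ} {E : Type*} [MeasurableSpace E]
    (μ : Fin n → Measure E) [∀ i, SigmaFinite (μ i)] {f : Fin n → E → ℝ≥0∞}
    (hf : ∀ i, Measurable (f i)) [∀ i, SigmaFinite ((μ i).withDensity (f i))] :
    Measure.pi (fun i => (μ i).withDensity (f i)) =
      (Measure.pi μ).withDensity fun x => ∏ i, f i (x i) := by
  refine Measure.pi_eq fun s hs => ?_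
  have hind : (Set.univ.pi s).indicator (fun x => ∏ i, f i (x i)) =
      fun x => ∏ i, (s i).indicator (f i) (x i) := by
    funext x
    classical
    simp only [Set.indicator_apply, Finset.prod_ite_zero, Finset.mem_univ, forall_const,
      Set.mem_univ_pi]
  simp_rw [withDensity_apply _ (MeasurableSet.univ_pi hs), withDensity_apply _ (hs _),
    ← lintegral_indicator (MeasurableSet.univ_pi hs), ← lintegral_indicator (hs _), hind]
  exact lintegral_fin_nat_prod_eq_prod fun i => (hf i).indicator (hs i)

lemma pi_gaussianReal_eq_withDensity {n : ℕ} (m : Fin n → ℝ) {v : ℝ≥0} (hv : v ≠ 0) :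
    Measure.pi (fun j => gaussianReal (m j) v) =
      volume.withDensity fun y => ∏ j, gaussianPDF (m j) v (y j) := by
  have (j : Fin n) : SigmaFinite (volume.withDensity (gaussianPDF (m j) v)) := by
    rw [← gaussianReal_of_var_ne_zero _ hv]
    infer_instance
  simp_rw [gaussianReal_of_var_ne_zero _ hv]
  exact pi_withDensity _ fun j => measurable_gaussianPDF _ _

lemma exp_sub_sq_div_eq_mul_gaussianPDFReal (d m t : ℝ) {v : ℝ≥0} (hv : v ≠ 0) :
    exp (d - (t - m) ^ 2 / (2 * v)) = exp d * √(2 * π * v) * gaussianPDFReal m v t := by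
  have : 0 < √(2 * π * v) := by positivity
  rw [gaussianPDFReal, sub_eq_add_neg, exp_add, ← neg_div]
  field_simp

lemma restrict_withDensity_eq_smul_of_eqOn {X : Type*} [MeasurableSpace X] {μ : Measure X}
    {f g : X → ℝ≥0∞} (hg : Measurable g) {s : Set X} (hs : MeasurableSet s) {c : ℝ≥0∞}
    (h : ∀ x ∈ s, f x = c * g x) :
    (μ.withDensity f).restrict s = c • (μ.withDensity g).restrict s := by
  rw [restrict_withDensity hs, restrict_withDensity hs, ← withDensity_smul _ hg]
  exact withDensity_congr_ae ((ae_restrict_iff' hs).2 (ae_of_all _ h))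

section OrderStatistics

open Finset in
lemma sortAsc_le_iff {n : ℕ} (x : Fin n → ℝ) (j : Fin n) (t : ℝ) :
    sortAsc x j ≤ t ↔ j < #{i | x i ≤ t} := by
  refine (Tuple.lt_card_le_iff_apply_le_of_monotone (Tuple.monotone_sort x)).symm.trans ?_
  rw [card_equiv (Tuple.sort x) (t := {i | x i ≤ t}) (by simp)]

lemma measurable_sortAsc {n : ℕ} : Measurable (sortAsc (n := n)) := by
  refine measurable_pi_lambda _ fun j => measurable_of_Iic fun t => ?_
  have hcount : Measurable fun x : Fin n → ℝ => (Finset.univ.filter fun i => x i ≤ t).card := by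
    simp_rw [Finset.card_filter]
    exact Finset.measurable_sum _ fun i _ =>
      Measurable.ite (measurableSet_le (measurable_pi_apply i) measurable_const)
        measurable_const measurable_const
  have : (fun x : Fin n → ℝ => sortAsc x j) ⁻¹' Iic t =
      (fun x : Fin n → ℝ => (Finset.univ.filter fun i => x i ≤ t).card) ⁻¹' Ioi (j : ℕ) := by
    ext x
    simp [sortAsc_le_iff]
  rw [this]
  exact hcount .of_discrete

lemma sortAsc_of_monotone_comp {n : ℕ} {x : Fin n → ℝ} {σ : Equiv.Perm (Fin n)}
    (h : Monotone (x ∘ σ)) : sortAsc x = x ∘ σ :=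
  Tuple.unique_monotone (Tuple.monotone_sort x) h

lemma ae_injective {ι : Type*} [Fintype ι] : ∀ᵐ x : ι → ℝ, Function.Injective x := by
  classical
  simp only [Function.Injective, ae_all_iff]
  intro i j
  by_cases hij : i = j
  · exact ae_of_all _ fun _ _ => hij
  let L : Submodule ℝ (ι → ℝ) :=
    LinearMap.ker ((LinearMap.proj i : (ι → ℝ) →ₗ[ℝ] ℝ) - LinearMap.proj j)
  have hL : L ≠ ⊤ := fun h => by
    have := h ▸ Submodule.mem_top (x := Pi.single i (1 : ℝ))
    simp [L, hij] at this
  refine ae_iff.2 (measure_mono_null (fun x hx => ?_) (Measure.addHaar_submodule volume L hL))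
  simp only [Set.mem_ofPred_eq, Classical.not_imp] at hx
  simp [L, hx.1]

lemma measurePreserving_comp_perm {ι : Type*} [Fintype ι] (σ : Equiv.Perm ι) :
    MeasurePreserving (fun x : ι → ℝ => x ∘ σ) := by
  have : (fun x : ι → ℝ => x ∘ σ) = MeasurableEquiv.piCongrLeft (fun _ => ℝ) σ.symm := by
    ext x i
    simp [MeasurableEquiv.piCongrLeft, Equiv.piCongrLeft, Equiv.piCongrLeft']
  rw [this]
  exact volume_measurePreserving_piCongrLeft (fun _ : ι => ℝ) σ.symm

lemma measurePreserving_comp_perm_withDensity {ι : Type*} [Fintype ι] {f : (ι → ℝ) → ℝ≥0∞}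
    (hf : Measurable f) {σ : Equiv.Perm ι} (hfσ : ∀ x, f (x ∘ σ) = f x) :
    MeasurePreserving (fun x : ι → ℝ => x ∘ σ) (volume.withDensity f) (volume.withDensity f) := by
  have hσ := measurePreserving_comp_perm σ
  refine ⟨hσ.measurable, Measure.ext fun s hs => ?_⟩
  rw [Measure.map_apply hσ.measurable hs, withDensity_apply _ (hs.preimage hσ.measurable),
    withDensity_apply _ hs, ← hσ.setLIntegral_comp_preimage hs hf]
  simp_rw [hfσ]

theorem map_sortAsc_restrict {n : ℕ} {μ : Measure (Fin n → ℝ)}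
    (hμ : ∀ σ : Equiv.Perm (Fin n), MeasurePreserving (fun x => x ∘ σ) μ μ)
    (hinj : ∀ᵐ x ∂μ, Function.Injective x) {E : Set (Fin n → ℝ)} (hE : MeasurableSet E)
    (hEσ : ∀ (σ : Equiv.Perm (Fin n)) x, x ∘ σ ∈ E ↔ x ∈ E) :
    (μ.restrict E).map sortAsc = (n.factorial : ℝ≥0∞) • μ.restrict {x | Monotone x ∧ x ∈ E} := by
  set S := {x : Fin n → ℝ | Monotone x ∧ x ∈ E}
  have hS : MeasurableSet S := isClosed_monotone.measurableSet.inter hE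
  set A : Equiv.Perm (Fin n) → Set (Fin n → ℝ) := fun σ => (fun x => x ∘ σ) ⁻¹' S
  have hA_meas (σ) : MeasurableSet (A σ) := hS.preimage (hμ σ).measurable
  -- `A σ` is where `σ` sorts `x`; these sets cover `E` and overlap only at ties.
  have hA_cover : ⋃ σ, A σ = E := by
    ext x
    rw [Set.mem_iUnion]
    exact ⟨fun ⟨σ, _, hx⟩ => (hEσ σ x).1 hx,
      fun hx => ⟨Tuple.sort x, Tuple.monotone_sort x, (hEσ _ x).2 hx⟩⟩
  have hA_disj : Pairwise (Function.onFun (AEDisjoint μ) A) := by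
    intro σ τ hστ
    refine measure_mono_null (fun x hx (hx_inj : Function.Injective x) => hστ ?_) (ae_iff.1 hinj)
    exact Equiv.ext fun i => hx_inj (congrFun (Tuple.unique_monotone hx.1.1 hx.2.1) i)
  have hA_map (σ) : (μ.restrict (A σ)).map sortAsc = μ.restrict S := by
    rw [Measure.map_congr (ae_restrict_of_forall_mem (hA_meas σ)
      fun x hx => sortAsc_of_monotone_comp hx.1)]
    exact ((hμ σ).restrict_preimage hS).map_eq
  calc (μ.restrict E).map sortAsc
      = (Measure.sum fun σ => μ.restrict (A σ)).map sortAsc := by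
        rw [← hA_cover, Measure.restrict_iUnion_ae hA_disj fun σ => (hA_meas σ).nullMeasurableSet]
    _ = Measure.sum fun σ => (μ.restrict (A σ)).map sortAsc :=
        Measure.map_sum measurable_sortAsc.aemeasurable
    _ = (n.factorial : ℝ≥0∞) • μ.restrict S := by
        simp_rw [hA_map]
        rw [Measure.sum_fintype, Finset.sum_const, Finset.card_univ, Fintype.card_perm,
          Fintype.card_fin, Nat.cast_smul_eq_nsmul]

end OrderStatistics

lemma map_cond_eq_cond_of_map_restrict_eq_smul {Ω Ω' : Type*} [MeasurableSpace Ω]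
    [MeasurableSpace Ω'] {f : Ω → Ω'} (hf : Measurable f) {P : Measure Ω} {E : Set Ω}
    (hPE : P E ≠ 0) {ν : Measure Ω'} {S : Set Ω'} {c : ℝ≥0∞} (hc : c ≠ ∞)
    (h : (P.restrict E).map f = c • ν.restrict S) :
    (P[|E]).map f = ν[|S] := by
  have hmass : P E = c * ν S := by
    simpa [Measure.map_apply hf MeasurableSet.univ] using congrArg (· Set.univ) h
  have hc0 : c ≠ 0 := by
    rintro rfl
    exact hPE (by simpa using hmass)
  rw [ProbabilityTheory.cond, ProbabilityTheory.cond, Measure.map_smul, h, smul_smul, hmass,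
    ENNReal.mul_inv (Or.inl hc0) (Or.inl hc), mul_right_comm, ENNReal.inv_mul_cancel hc0 hc,
    one_mul]

lemma withDensity_ofReal_exp_apply_ne_zero {X : Type*} [MeasurableSpace X] {μ : Measure X}
    {g : X → ℝ} (hg : Measurable g) {s : Set X} (hs : μ s ≠ 0) :
    μ.withDensity (fun x => ENNReal.ofReal (exp (g x))) s ≠ 0 := by
  rwa [Ne, withDensity_apply_eq_zero' (by fun_prop), show {x | ENNReal.ofReal (exp (g x)) ≠ 0} =
    Set.univ by ext; simp [exp_pos], Set.univ_inter]

section Gibbs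

variable {n : ℕ} {β : ℝ} {H : (Fin n → ℝ) → ℝ}

lemma lintegral_ofReal_exp_ne_zero (hH : Measurable H) :
    ∫⁻ x, ENNReal.ofReal (exp (-β * H x)) ≠ 0 := by
  simpa using withDensity_ofReal_exp_apply_ne_zero (μ := volume) (by fun_prop : Measurable
    fun x => -β * H x) (isOpen_univ.measure_ne_zero volume Set.univ_nonempty)

lemma gibbs_apply_ne_zero (hH : Measurable H) (hZ : ∫⁻ x, ENNReal.ofReal (exp (-β * H x)) ≠ ∞)
    {s : Set (Fin n → ℝ)} (hs : volume s ≠ 0) : gibbs n β H s ≠ 0 :=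
  mul_ne_zero (ENNReal.inv_ne_zero.2 hZ)
    (withDensity_ofReal_exp_apply_ne_zero (by fun_prop : Measurable fun x => -β * H x) hs)

lemma measurePreserving_comp_perm_gibbs (hH : Measurable H)
    (hHσ : ∀ (x : Fin n → ℝ) (σ : Equiv.Perm (Fin n)), H (x ∘ σ) = H x)
    (σ : Equiv.Perm (Fin n)) :
    MeasurePreserving (fun x => x ∘ σ) (gibbs n β H) (gibbs n β H) :=
  (measurePreserving_comp_perm_withDensity (by fun_prop) fun x => by rw [hHσ]).smul_measure _

lemma ae_injective_gibbs : ∀ᵐ x ∂gibbs n β H, Function.Injective x :=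
  ((withDensity_absolutelyContinuous _ _).smul_left _).ae_le ae_injective

end Gibbs

lemma neg_mul_jelliumH_of_monotone {n : ℕ} {a b α β : ℝ} {ρ : ℝ → ℝ}
    (hU : coulombU ρ = uniformCoulombU a b) {y : Fin n → ℝ} (hy : Monotone y) :
    -β * jelliumH n α ρ y = ∑ k : Fin n, (β / 2 * ((n : ℝ) + 1 - 2 * ((n : ℝ) - (k : ℕ))) * y k +
      α * β * uniformCoulombU a b (y k)) := by
  rw [jelliumH, pairSum_of_monotone hy, hU, Finset.mul_sum, Finset.mul_sum,
    ← Finset.sum_sub_distrib, Finset.mul_sum]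
  exact Finset.sum_congr rfl fun k _ => by ring

lemma exists_exp_linear_add_uniformCoulombU_eq_mul_gaussianPDFReal {a b α β : ℝ} (hab : a < b)
    (hα : 0 < α) (hβ : 0 < β) (l : ℝ) :
    ∃ C : ℝ, 0 ≤ C ∧ ∀ t ∈ Set.Icc a b,
      exp (β / 2 * l * t + α * β * uniformCoulombU a b t) =
        C * gaussianPDFReal ((a + b) / 2 + (b - a) / (2 * α) * l)
          (Real.toNNReal ((b - a) / (α * β))) t := by
  set m := (a + b) / 2 + (b - a) / (2 * α) * l
  set v := Real.toNNReal ((b - a) / (α * β))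
  have hba : b - a ≠ 0 := (sub_pos.2 hab).ne'
  have hvar : 0 < (b - a) / (α * β) := div_pos (sub_pos.2 hab) (mul_pos hα hβ)
  have hv : (v : ℝ) = (b - a) / (α * β) := Real.coe_toNNReal _ hvar.le
  have hv0 : v ≠ 0 := (Real.toNNReal_pos.2 hvar).ne'
  refine ⟨exp (-(α * β * (a ^ 2 + b ^ 2)) / (4 * (b - a)) + m ^ 2 / (2 * v)) * √(2 * π * v),
    by positivity, fun t ht => ?_⟩
  rw [← exp_sub_sq_div_eq_mul_gaussianPDFReal _ _ _ hv0, hv, uniformCoulombU_of_mem_Icc ht]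
  congr 1
  simp only [m]
  field_simp
  ring

lemma exists_restrict_withDensity_jelliumH_eq_smul {n : ℕ} {a b α β : ℝ} {ρ : ℝ → ℝ}
    (hab : a < b) (hα : 0 < α) (hβ : 0 < β) (hU : coulombU ρ = uniformCoulombU a b) :
    ∃ C ≠ ∞,
      (volume.withDensity fun x => ENNReal.ofReal (exp (-β * jelliumH n α ρ x))).restrict
          {y | Monotone y ∧ ∀ j, y j ∈ Set.Icc a b} =
        C • (Measure.pi fun j : Fin n =>
          gaussianReal ((a + b) / 2 + (b - a) / (2 * α) * ((n : ℝ) + 1 - 2 * ((n : ℝ) - (j : ℕ))))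
            (Real.toNNReal ((b - a) / (α * β)))).restrict
          {y | Monotone y ∧ ∀ j, y j ∈ Set.Icc a b} := by
  choose C hC0 hC using fun k : Fin n =>
    exists_exp_linear_add_uniformCoulombU_eq_mul_gaussianPDFReal hab hα hβ
      ((n : ℝ) + 1 - 2 * ((n : ℝ) - (k : ℕ)))
  refine ⟨ENNReal.ofReal (∏ k, C k), ENNReal.ofReal_ne_top, ?_⟩
  rw [pi_gaussianReal_eq_withDensity _
    (Real.toNNReal_pos.2 (div_pos (sub_pos.2 hab) (mul_pos hα hβ))).ne']
  have hE : MeasurableSet {y : Fin n → ℝ | ∀ j, y j ∈ Set.Icc a b} := by measurability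
  refine restrict_withDensity_eq_smul_of_eqOn
    (Finset.measurable_prod _ fun j _ => (measurable_gaussianPDF _ _).comp (measurable_pi_apply j))
    (isClosed_monotone.measurableSet.inter hE) fun y hy => ?_
  simp_rw [neg_mul_jelliumH_of_monotone hU hy.1, exp_sum]
  rw [Finset.prod_congr rfl fun k _ => hC k (y k) (hy.2 k), Finset.prod_mul_distrib,
    ENNReal.ofReal_mul (Finset.prod_nonneg fun k _ => hC0 k),
    ENNReal.ofReal_prod_of_nonneg fun k _ => gaussianPDFReal_nonneg _ _ _]
  rfl

/-- **Conditionally Gaussian representation of the uniform jellium.**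
Let `ρ` be the uniform probability density on `[a,b]`, `α > n−1`, `β > 0`, and let
`X ∼ P_n` be the jellium Gibbs measure with background `αρ`.  The law of the order
statistics `(X₍n₎, …, X₍₁₎)` conditioned on all particles lying in `[a,b]` equals the law
of `(Y_n, …, Y_1)` conditioned on `a ≤ Y_n ≤ ⋯ ≤ Y_1 ≤ b`, where `Y_1, …, Y_n` are
independent Gaussians with `E[Y_k] = (a+b)/2 + ((b−a)/(2α))(n+1−2k)` and variance
`(b−a)/(αβ)`.  (Below the `j`-th coordinate, `j = 0, …, n−1`, represents `Y_{n−j}`.) -/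
theorem uniform_jellium_conditionally_gaussian
    (n : ℕ) (a b α β : ℝ) (hab : a < b) (hα : (n : ℝ) - 1 < α) (hα0 : 0 < α) (hβ : 0 < β)
    (ρ : ℝ → ℝ) (hρ : ρ = Set.indicator (Set.Icc a b) fun _ => 1 / (b - a)) :
    Measure.map sortAsc
        ((gibbs n β (jelliumH n α ρ))[|{x | ∀ i, x i ∈ Set.Icc a b}]) =
      (Measure.pi fun j : Fin n =>
          gaussianReal ((a + b) / 2 + (b - a) / (2 * α) * ((n : ℝ) + 1 - 2 * ((n : ℝ) - (j : ℕ))))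
            (Real.toNNReal ((b - a) / (α * β))))[|{y | Monotone y ∧ ∀ j, y j ∈ Set.Icc a b}] := by
  have hU : coulombU ρ = uniformCoulombU a b := hρ ▸ coulombU_indicator_Icc hab.le
  have hUc : Continuous (coulombU ρ) := hU ▸ continuous_uniformCoulombU a b
  have hH : Measurable (jelliumH n α ρ) := (continuous_jelliumH hUc).measurable
  set Z := ∫⁻ x, ENNReal.ofReal (exp (-β * jelliumH n α ρ x))
  have hZ : Z ≠ ∞ :=
    (lintegral_exp_neg_mul_jelliumH_lt_top (hU ▸ uniformCoulombU_le hab) hUc hα hα0.le hβ).ne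
  have hZ0 : Z ≠ 0 := lintegral_ofReal_exp_ne_zero hH
  set E := {x : Fin n → ℝ | ∀ i, x i ∈ Set.Icc a b}
  have hE : E = Set.univ.pi fun _ => Set.Icc a b := Set.ext fun x => Set.mem_univ_pi.symm
  have hvolE : volume E ≠ 0 := by
    rw [hE, volume_pi_pi]
    simp [hab]
  obtain ⟨C, hC, hdens⟩ := exists_restrict_withDensity_jelliumH_eq_smul (n := n) hab hα0 hβ hU
  refine map_cond_eq_cond_of_map_restrict_eq_smul measurable_sortAsc
    (gibbs_apply_ne_zero hH hZ hvolE) (c := n.factorial * Z⁻¹ * C) (by finiteness) ?_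
  rw [map_sortAsc_restrict (E := E) (measurePreserving_comp_perm_gibbs hH jelliumH_comp_perm)
    ae_injective_gibbs (hE ▸ .univ_pi fun _ => measurableSet_Icc)
    fun σ x => ⟨fun h i => by simpa using h (σ.symm i), fun h i => h (σ i)⟩,
    gibbs, Measure.restrict_smul, ← smul_smul, ← smul_smul]
  exact congrArg (fun μ => (n.factorial : ℝ≥0∞) • Z⁻¹ • μ) hdens
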